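/- arXiv:1709.03398 — 2 statements merged into one kernel-verified Lean document; each statement's English description precedes it below -/
import Mathlib

section
/- For all a ∈ ℂ \ {-1,-2,-3,...}, ∏_{n≥1} [((2n+2a)(2n+a+1)) / ((2n+a)(2n+1))]^{(-1)^{t_n}} = 1/(a+1). -/
/-!
Write `u k = (k + a) / k` (`addRatio`) and `ε k = (-1) ^ tm k`. The `n`-th factor of the
product is `u n / g n` with `g n = u (2n) / u (2n+1)` (`pairRatio`). Since `ε (2n) = ε n` and
`ε (2n+1) = -ε n`, grouping `∏_{k ≤ 2N+1} u k ^ ε k` in pairs gives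
`u 1⁻¹ * ∏_{n ≤ N} g n ^ ε n`. As `g n = 1 + O(n⁻²)`, the product `∏ g n ^ ε n` converges to
some `L ≠ 0`; hence `∏_{k ≤ N} u k ^ ε k → L / (1 + a)`, and the product in question, the
quotient of these two, tends to `1 / (1 + a)`.
-/

open Filter Finset Topology

/-- The Thue–Morse sequence: sum modulo 2 of the binary digits of `n`. -/
def tm (n : ℕ) : ℕ := (Nat.digits 2 n).sum % 2

lemma tm_two_mul (n : ℕ) : tm (2 * n) = tm n := by
  rcases Nat.eq_zero_or_pos n with rfl | hn
  · rfl
  · simp [tm, Nat.digits_def' one_lt_two (by omega : 0 < 2 * n)]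

lemma neg_one_pow_tm_two_mul_add_one (n : ℕ) :
    (-1 : ℤ) ^ tm (2 * n + 1) = -(-1) ^ tm n := by
  have hdigits : Nat.digits 2 (2 * n + 1) = 1 :: Nat.digits 2 n := by
    rw [Nat.digits_def' one_lt_two (by omega)]
    congr 2 <;> omega
  rw [tm, tm, hdigits, List.sum_cons, ← neg_one_pow_eq_pow_mod_two, ← neg_one_pow_eq_pow_mod_two,
    pow_add, pow_one, neg_one_mul]

theorem prod_range_two_mul_add_one_zpow_tm {α : Type*} [DivisionCommMonoid α] (u : ℕ → α)
    (N : ℕ) :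
    ∏ n ∈ range (2 * N + 1), u (n + 1) ^ (-1 : ℤ) ^ tm (n + 1) =
      (u 1)⁻¹ *
        ∏ m ∈ range N, (u (2 * (m + 1)) / u (2 * (m + 1) + 1)) ^ (-1 : ℤ) ^ tm (m + 1) := by
  induction N with
  | zero => simp [tm]
  | succ N ih =>
    have hpair : u (2 * (N + 1)) ^ (-1 : ℤ) ^ tm (2 * (N + 1)) *
        u (2 * (N + 1) + 1) ^ (-1 : ℤ) ^ tm (2 * (N + 1) + 1) =
        (u (2 * (N + 1)) / u (2 * (N + 1) + 1)) ^ (-1 : ℤ) ^ tm (N + 1) := by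
      rw [div_zpow, div_eq_mul_inv, ← zpow_neg, tm_two_mul, neg_one_pow_tm_two_mul_add_one]
    rw [prod_range_succ, mul_add_one, prod_range_succ, ih, mul_assoc, mul_assoc, prod_range_succ,
      ← hpair]
    rfl

lemma tendsto_of_tendsto_two_mul_of_tendsto_two_mul_add_one {X : Type*} {f : ℕ → X}
    {l : Filter X} (h₀ : Tendsto (fun n => f (2 * n)) atTop l)
    (h₁ : Tendsto (fun n => f (2 * n + 1)) atTop l) : Tendsto f atTop l := by
  rw [tendsto_atTop'] at h₀ h₁ ⊢
  intro s hs
  obtain ⟨N₀, hN₀⟩ := h₀ s hs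
  obtain ⟨N₁, hN₁⟩ := h₁ s hs
  refine ⟨2 * (N₀ + N₁), fun n hn => ?_⟩
  obtain ⟨k, rfl | rfl⟩ := Nat.even_or_odd' n
  · exact hN₀ k (by omega)
  · exact hN₁ k (by omega)

section NormedDivisionRing

variable {𝕜 : Type*} [NormedDivisionRing 𝕜]

lemma norm_zpow_sub_one_le (x : 𝕜) {e : ℤ} (he : e = 1 ∨ e = -1) :
    ‖x ^ e - 1‖ ≤ ‖x - 1‖ + ‖x⁻¹ - 1‖ := by
  rcases he with rfl | rfl <;> simp

lemma summable_norm_zpow_sub_one {ι : Type*} {x : ι → 𝕜} {e : ι → ℤ}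
    (he : ∀ i, e i = 1 ∨ e i = -1) (hx : Summable fun i => ‖x i - 1‖)
    (hx' : Summable fun i => ‖(x i)⁻¹ - 1‖) : Summable fun i => ‖x i ^ e i - 1‖ :=
  (hx.add hx').of_nonneg_of_le (fun _ => norm_nonneg _) fun i => norm_zpow_sub_one_le _ (he i)

lemma Filter.Tendsto.zpow_of_eq_one_or {ι : Type*} {l : Filter ι} {x : ι → 𝕜} {e : ι → ℤ}
    (hx : Tendsto x l (𝓝 1)) (he : ∀ i, e i = 1 ∨ e i = -1) :
    Tendsto (fun i => x i ^ e i) l (𝓝 1) := by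
  have hx' : Tendsto (fun i => (x i)⁻¹) l (𝓝 1) := by simpa using hx.inv₀ one_ne_zero
  rw [tendsto_iff_norm_sub_tendsto_zero] at hx hx' ⊢
  exact squeeze_zero (fun _ => norm_nonneg _) (fun i => norm_zpow_sub_one_le _ (he i))
    (by simpa using hx.add hx')

end NormedDivisionRing

lemma exists_tendsto_prod_range_ne_zero {R : Type*} [NormedCommRing R] [NormOneClass R]
    [NormMulClass R] [CompleteSpace R] {w : ℕ → R} (hw : ∀ n, w n ≠ 0)
    (hs : Summable fun n => ‖w n - 1‖) :
    ∃ L ≠ 0, Tendsto (fun N => ∏ n ∈ range N, w n) atTop (𝓝 L) := by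
  obtain ⟨f, rfl⟩ : ∃ f : ℕ → R, w = fun n => 1 + f n := ⟨fun n => w n - 1, by simp⟩
  simp only [add_sub_cancel_left] at hs
  exact ⟨_, tprod_one_add_ne_zero_of_summable hw hs,
    (multipliable_one_add_of_summable hs).tendsto_prod_tprod_nat⟩

lemma eventually_le_norm_two_mul_natCast_add (z : ℂ) :
    ∀ᶠ n : ℕ in atTop, (n : ℝ) ≤ ‖2 * (n : ℂ) + z‖ := by
  filter_upwards [eventually_ge_atTop ⌈‖z‖⌉₊] with n hn
  have hz := Nat.ceil_le.1 hn
  have hn := norm_sub_le (2 * (n : ℂ) + z) z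
  rw [add_sub_cancel_right, norm_mul, Complex.norm_natCast, Complex.norm_two] at hn
  linarith

lemma summable_norm_div_mul_two_mul_natCast_add (a b c : ℂ) :
    Summable fun n : ℕ => ‖a / ((2 * n + b) * (2 * n + c))‖ := by
  refine Summable.of_norm_bounded_eventually_nat
    ((Real.summable_one_div_nat_pow.2 one_lt_two).mul_left ‖a‖) ?_
  filter_upwards [eventually_le_norm_two_mul_natCast_add b,
    eventually_le_norm_two_mul_natCast_add c, eventually_gt_atTop 0] with n hb hc hn
  have hn' : (0 : ℝ) < n := by exact_mod_cast hn
  rw [norm_norm, norm_div, norm_mul, mul_one_div, sq]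
  gcongr

noncomputable def addRatio (a : ℂ) (k : ℕ) : ℂ := (k + a) / k

noncomputable def pairRatio (a : ℂ) (m : ℕ) : ℂ := addRatio a (2 * m) / addRatio a (2 * m + 1)

lemma tendsto_addRatio (a : ℂ) : Tendsto (addRatio a) atTop (𝓝 1) := by
  have h := (tendsto_const_div_atTop_nhds_zero_nat a).const_add (1 : ℂ)
  rw [add_zero] at h
  refine h.congr' ?_
  filter_upwards [eventually_ne_atTop 0] with k hk
  rw [addRatio, add_div, div_self (Nat.cast_ne_zero.2 hk)]

lemma pairRatio_eq (a : ℂ) (m : ℕ) :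
    pairRatio a m = ((2 * m + a) * (2 * m + 1)) / ((2 * m) * (2 * m + 1 + a)) := by
  simp only [pairRatio, addRatio, div_div_div_eq]
  push_cast
  ring

section

variable {a : ℂ} (ha : ∀ k : ℕ, a ≠ -((k : ℂ) + 1))
include ha

lemma natCast_add_ne_zero {k : ℕ} (hk : k ≠ 0) : (k : ℂ) + a ≠ 0 := by
  obtain ⟨j, rfl⟩ := Nat.exists_eq_succ_of_ne_zero hk
  exact fun h => ha j (by push_cast at h; linear_combination h)

lemma addRatio_ne_zero {k : ℕ} (hk : k ≠ 0) : addRatio a k ≠ 0 :=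
  div_ne_zero (natCast_add_ne_zero ha hk) (Nat.cast_ne_zero.2 hk)

lemma pairRatio_ne_zero {m : ℕ} (hm : m ≠ 0) : pairRatio a m ≠ 0 :=
  div_ne_zero (addRatio_ne_zero ha (by omega)) (addRatio_ne_zero ha (by omega))

lemma pairRatio_succ_sub_one (n : ℕ) :
    pairRatio a (n + 1) - 1 = a / ((2 * n + 2) * (2 * n + (3 + a))) := by
  have h : (2 * ((n + 1 : ℕ) : ℂ)) * (2 * ((n + 1 : ℕ) : ℂ) + 1 + a) ≠ 0 :=
    mul_ne_zero (by exact_mod_cast (by omega : 2 * (n + 1) ≠ 0))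
      (by simpa using natCast_add_ne_zero ha (k := 2 * (n + 1) + 1) (by omega))
  rw [pairRatio_eq, div_sub_one h]
  push_cast
  congr 1 <;> ring

lemma inv_pairRatio_succ_sub_one (n : ℕ) :
    (pairRatio a (n + 1))⁻¹ - 1 = -a / ((2 * n + (2 + a)) * (2 * n + 3)) := by
  have h : (2 * ((n + 1 : ℕ) : ℂ) + a) * (2 * ((n + 1 : ℕ) : ℂ) + 1) ≠ 0 :=
    mul_ne_zero (by simpa using natCast_add_ne_zero ha (k := 2 * (n + 1)) (by omega))
      (by exact_mod_cast (by omega : 2 * (n + 1) + 1 ≠ 0))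
  rw [pairRatio_eq, inv_div, div_sub_one h]
  push_cast
  congr 1 <;> ring

lemma factor_eq_addRatio_div_pairRatio (n : ℕ) :
    ((2 * ((n : ℂ) + 1) + 2 * a) * (2 * ((n : ℂ) + 1) + a + 1)) /
        ((2 * ((n : ℂ) + 1) + a) * (2 * ((n : ℂ) + 1) + 1)) =
      addRatio a (n + 1) / pairRatio a (n + 1) := by
  have h₀ := natCast_add_ne_zero ha (k := 2 * (n + 1)) (by omega)
  have h₁ := natCast_add_ne_zero ha (k := 2 * (n + 1) + 1) (by omega)
  push_cast at h₀ h₁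
  rw [pairRatio_eq, addRatio]
  push_cast
  field_simp
  ring

lemma exists_tendsto_prod_pairRatio :
    ∃ L ≠ 0, Tendsto (fun N => ∏ m ∈ range N, pairRatio a (m + 1) ^ (-1 : ℤ) ^ tm (m + 1))
      atTop (𝓝 L) :=
  exists_tendsto_prod_range_ne_zero
    (fun m => zpow_ne_zero _ (pairRatio_ne_zero ha m.succ_ne_zero))
    (summable_norm_zpow_sub_one (fun m => neg_one_pow_eq_or ℤ (tm (m + 1)))
      (by simpa only [pairRatio_succ_sub_one ha] using
        summable_norm_div_mul_two_mul_natCast_add a 2 (3 + a))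
      (by simpa only [inv_pairRatio_succ_sub_one ha] using
        summable_norm_div_mul_two_mul_natCast_add (-a) (2 + a) 3))

lemma tendsto_prod_addRatio {L : ℂ}
    (hG : Tendsto (fun N => ∏ m ∈ range N, pairRatio a (m + 1) ^ (-1 : ℤ) ^ tm (m + 1))
      atTop (𝓝 L)) :
    Tendsto (fun N => ∏ n ∈ range N, addRatio a (n + 1) ^ (-1 : ℤ) ^ tm (n + 1))
      atTop (𝓝 ((1 + a)⁻¹ * L)) := by
  set F : ℕ → ℂ := fun N => ∏ n ∈ range N, addRatio a (n + 1) ^ (-1 : ℤ) ^ tm (n + 1)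
  have hodd : Tendsto (fun N => F (2 * N + 1)) atTop (𝓝 ((1 + a)⁻¹ * L)) := by
    refine (hG.const_mul (1 + a)⁻¹).congr fun N => ?_
    rw [show F (2 * N + 1) = _ from prod_range_two_mul_add_one_zpow_tm (addRatio a) N]
    simp [addRatio, pairRatio, add_comm]
  have hlast : Tendsto (fun N => addRatio a (2 * N + 1) ^ (-1 : ℤ) ^ tm (2 * N + 1))
      atTop (𝓝 1) :=
    ((tendsto_addRatio a).comp (tendsto_atTop_atTop.2 fun b => ⟨b, fun N hN => by omega⟩)
      ).zpow_of_eq_one_or fun N => neg_one_pow_eq_or ℤ _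
  have heven : Tendsto (fun N => F (2 * N)) atTop (𝓝 ((1 + a)⁻¹ * L)) := by
    refine (div_one ((1 + a)⁻¹ * L) ▸ hodd.div hlast one_ne_zero).congr fun N => ?_
    rw [Pi.div_apply, show F (2 * N + 1) = F (2 * N) * _ from prod_range_succ _ _,
      mul_div_cancel_right₀ _ (zpow_ne_zero _ (addRatio_ne_zero ha (by omega)))]
  exact tendsto_of_tendsto_two_mul_of_tendsto_two_mul_add_one heven hodd

end

theorem prod_identity_iii (a : ℂ) (ha : ∀ k : ℕ, a ≠ -((k : ℂ) + 1)) :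
    Tendsto (fun N => ∏ n ∈ Finset.range N,
        (((2 * ((n : ℂ) + 1) + 2 * a) * (2 * ((n : ℂ) + 1) + a + 1)) /
          ((2 * ((n : ℂ) + 1) + a) * (2 * ((n : ℂ) + 1) + 1)))
          ^ ((-1 : ℤ) ^ tm (n + 1)))
      atTop (𝓝 (1 / (a + 1))) := by
  obtain ⟨L, hL, hG⟩ := exists_tendsto_prod_pairRatio ha
  have hlim : (1 + a)⁻¹ * L / L = 1 / (a + 1) := by
    rw [mul_div_cancel_right₀ _ hL, add_comm, one_div]
  simp_rw [factor_eq_addRatio_div_pairRatio ha, div_zpow, prod_div_distrib]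
  exact hlim ▸ (tendsto_prod_addRatio ha hG).div hG hL
end

section
/- ∏_{n≥0} [((n+1)(2n+1)) / ((n+2)(2n+3))]^{(-1)^{t_n}} = 1/2. -/
/-!
Write `ε n = (-1) ^ tm n` and `ℓ k = log (1 + 1 / k)`. Since `ε (2n) = ε n` and
`ε (2n + 1) = -ε n`, the partial sums of `ε` are bounded and pairing consecutive terms gives
`∑_{n < 2N} ε n u n = ∑_{n < N} ε n (u (2n) - u (2n + 1))`.

The logarithm of the `n`-th factor is `-(ℓ (n + 1) + ℓ (2n + 1) + ℓ (2n + 2))`, and by Dirichlet's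
test the three series `D = ∑ ε n ℓ (n + 1)`, `A = ∑ ε n ℓ (2n + 1)`, `B = ∑ ε n ℓ (2n + 2)`
converge. Pairing gives `D = A - B`, so the logarithm of the product is `-2A`.
Finally `2A = log 2` (Woods–Robbins): from `ℓ (2n) + ℓ (2n + 1) = ℓ n`, the series
`R = ∑_{n ≥ 1} ε n ℓ n` equals `Q + A - log 2` termwise, and `Q - A` by pairing,
where `Q = ∑_{n ≥ 1} ε n ℓ (2n)`.
-/

open Filter Finset Topology

noncomputable def tmSign (n : ℕ) : ℝ := (-1) ^ tm n

lemma tmSign_eq_neg_one_pow_digits_sum (n : ℕ) : tmSign n = (-1) ^ (Nat.digits 2 n).sum :=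
  (neg_one_pow_eq_pow_mod_two _).symm

@[simp] lemma tmSign_zero : tmSign 0 = 1 := by simp [tmSign, tm]

@[simp] lemma tmSign_two_mul (n : ℕ) : tmSign (2 * n) = tmSign n := by
  rcases n.eq_zero_or_pos with rfl | hn
  · simp
  · simp [tmSign_eq_neg_one_pow_digits_sum, Nat.digits_base_mul one_lt_two hn]

@[simp] lemma tmSign_two_mul_add_one (n : ℕ) : tmSign (2 * n + 1) = -tmSign n := by
  rw [tmSign_eq_neg_one_pow_digits_sum, tmSign_eq_neg_one_pow_digits_sum,
    Nat.digits_def' one_lt_two (2 * n).succ_pos]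
  simp [Nat.mul_add_div, pow_add]

lemma sum_range_two_mul_tmSign_mul (u : ℕ → ℝ) (N : ℕ) :
    ∑ n ∈ range (2 * N), tmSign n * u n =
      ∑ n ∈ range N, tmSign n * (u (2 * n) - u (2 * n + 1)) := by
  induction N with
  | zero => simp
  | succ N ih =>
    rw [mul_add_one, sum_range_succ, sum_range_succ, sum_range_succ, ih, tmSign_two_mul,
      tmSign_two_mul_add_one]
    ring

lemma abs_sum_range_tmSign_le (N : ℕ) : |∑ n ∈ range N, tmSign n| ≤ 1 := by
  have h := sum_range_two_mul_tmSign_mul 1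
  simp only [Pi.one_apply, mul_one, sub_self, mul_zero, sum_const_zero] at h
  obtain ⟨k, rfl | rfl⟩ := N.even_or_odd'
  · simp [h]
  · rw [sum_range_succ, h, zero_add, tmSign]
    simp

lemma abs_sum_range_tmSign_succ_le (N : ℕ) : |∑ n ∈ range N, tmSign (n + 1)| ≤ 2 := by
  have h : ∑ n ∈ range N, tmSign (n + 1) = ∑ n ∈ range (N + 1), tmSign n - 1 := by
    rw [sum_range_succ', tmSign_zero, add_sub_cancel_right]
  have := abs_sum_range_tmSign_le (N + 1)
  calc |∑ n ∈ range N, tmSign (n + 1)| ≤ |∑ n ∈ range (N + 1), tmSign n| + |(1 : ℝ)| := by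
        rw [h]; exact abs_sub _ _
    _ ≤ 2 := by rw [abs_one]; linarith

lemma exists_tendsto_sum_mul_of_antitone {z u : ℕ → ℝ} {b : ℝ}
    (hz : ∀ N, |∑ n ∈ range N, z n| ≤ b) (hu : Antitone u) (hu0 : Tendsto u atTop (𝓝 0)) :
    ∃ s, Tendsto (fun N => ∑ n ∈ range N, z n * u n) atTop (𝓝 s) := by
  have := hu.cauchySeq_series_mul_of_tendsto_zero_of_bounded hu0
    fun N => (Real.norm_eq_abs _).trans_le (hz N)
  simp only [smul_eq_mul, mul_comm (u _)] at this
  exact cauchySeq_tendsto_of_complete this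

-- `logOneAddInv 0 = 0` because `(0 : ℝ)⁻¹ = 0`, so sums of `tmSign n * logOneAddInv n` over
-- `range N` are the sums over `1 ≤ n < N`.
noncomputable def logOneAddInv (k : ℕ) : ℝ := Real.log (1 + (k : ℝ)⁻¹)

@[simp] lemma logOneAddInv_zero : logOneAddInv 0 = 0 := by simp [logOneAddInv]

@[simp] lemma logOneAddInv_one : logOneAddInv 1 = Real.log 2 := by norm_num [logOneAddInv]

lemma antitone_logOneAddInv_succ : Antitone fun n : ℕ => logOneAddInv (n + 1) := by
  intro a b hab
  apply Real.log_le_log (by positivity)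
  gcongr

lemma tendsto_logOneAddInv : Tendsto logOneAddInv atTop (𝓝 0) := by
  unfold logOneAddInv
  have h : Tendsto (fun k : ℕ => 1 + (k : ℝ)⁻¹) atTop (𝓝 1) := by
    simpa using (tendsto_inv_atTop_zero.comp tendsto_natCast_atTop_atTop).const_add (1 : ℝ)
  have := (Real.continuousAt_log one_ne_zero).tendsto.comp h
  rwa [Real.log_one] at this

lemma logOneAddInv_two_mul_add_two_mul_add_one {n : ℕ} (hn : n ≠ 0) :
    logOneAddInv (2 * n) + logOneAddInv (2 * n + 1) = logOneAddInv n := by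
  unfold logOneAddInv
  rw [← Real.log_mul (by positivity) (by positivity)]
  congr 1
  push_cast
  field_simp
  ring

noncomputable def tmFactor (n : ℕ) : ℝ :=
  ((n : ℝ) + 1) * (2 * (n : ℝ) + 1) / (((n : ℝ) + 2) * (2 * (n : ℝ) + 3))

lemma log_tmFactor (n : ℕ) : Real.log (tmFactor n) =
    -(logOneAddInv (n + 1) + logOneAddInv (2 * n + 1) + logOneAddInv (2 * n + 2)) := by
  unfold logOneAddInv tmFactor
  rw [← Real.log_mul (by positivity) (by positivity),
    ← Real.log_mul (by positivity) (by positivity), ← Real.log_inv]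
  congr 1
  push_cast
  field_simp
  ring

lemma sum_range_succ_tmSign_mul_logOneAddInv_two_mul_add (N : ℕ) :
    ∑ n ∈ range (N + 1), tmSign n * (logOneAddInv (2 * n) + logOneAddInv (2 * n + 1)) =
      ∑ n ∈ range (N + 1), tmSign n * logOneAddInv n + Real.log 2 := by
  simp [sum_range_succ' _ N, logOneAddInv_two_mul_add_two_mul_add_one]

lemma exists_tendsto_sum_tmSign_mul_logOneAddInv_comp {f : ℕ → ℕ} (hf : StrictMono f) :
    ∃ s, Tendsto (fun N => ∑ n ∈ range N, tmSign n * logOneAddInv (f n + 1)) atTop (𝓝 s) :=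
  exists_tendsto_sum_mul_of_antitone abs_sum_range_tmSign_le
    (antitone_logOneAddInv_succ.comp_monotone hf.monotone)
    (tendsto_logOneAddInv.comp ((tendsto_add_atTop_nat 1).comp hf.tendsto_atTop))

theorem tendsto_sum_tmSign_mul_logOneAddInv_two_mul_add_one :
    Tendsto (fun N => ∑ n ∈ range N, tmSign n * logOneAddInv (2 * n + 1)) atTop
      (𝓝 (Real.log 2 / 2)) := by
  obtain ⟨a, hA⟩ := exists_tendsto_sum_tmSign_mul_logOneAddInv_comp
    (f := fun n => 2 * n) fun _ _ h => by dsimp only; omega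
  obtain ⟨r, hR⟩ :
      ∃ r, Tendsto (fun N => ∑ n ∈ range N, tmSign n * logOneAddInv n) atTop (𝓝 r) := by
    obtain ⟨r, hr⟩ := exists_tendsto_sum_mul_of_antitone abs_sum_range_tmSign_succ_le
      antitone_logOneAddInv_succ (tendsto_logOneAddInv.comp (tendsto_add_atTop_nat 1))
    refine ⟨r, (tendsto_add_atTop_iff_nat 1).1 ?_⟩
    simpa [sum_range_succ'] using hr
  have hQ : Tendsto (fun N => ∑ n ∈ range N, tmSign n * logOneAddInv (2 * n)) atTop
      (𝓝 (r + Real.log 2 - a)) := by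
    rw [← tendsto_add_atTop_iff_nat 1]
    refine (((hR.add_const _).sub hA).comp (tendsto_add_atTop_nat 1)).congr fun N => ?_
    simp only [Function.comp_apply, ← sum_range_succ_tmSign_mul_logOneAddInv_two_mul_add, mul_add,
      sum_add_distrib, add_sub_cancel_right]
  have hR2 : Tendsto (fun N => ∑ n ∈ range (2 * N), tmSign n * logOneAddInv n) atTop
      (𝓝 (r + Real.log 2 - a - a)) := by
    refine (hQ.sub hA).congr fun N => ?_
    simp only [sum_range_two_mul_tmSign_mul, mul_sub, sum_sub_distrib]
  have := tendsto_nhds_unique (hR.comp (tendsto_id.const_mul_atTop' two_pos)) hR2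
  rwa [show a = Real.log 2 / 2 by linarith] at hA

theorem tendsto_sum_tmSign_mul_log_tmFactor :
    Tendsto (fun N => ∑ n ∈ range N, tmSign n * Real.log (tmFactor n)) atTop
      (𝓝 (-Real.log 2)) := by
  have hA := tendsto_sum_tmSign_mul_logOneAddInv_two_mul_add_one
  obtain ⟨b, hB⟩ := exists_tendsto_sum_tmSign_mul_logOneAddInv_comp (f := fun n => 2 * n + 1)
    fun _ _ h => by dsimp only; omega
  obtain ⟨d, hD⟩ := exists_tendsto_sum_tmSign_mul_logOneAddInv_comp strictMono_id
  have hd : d = Real.log 2 / 2 - b := by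
    refine tendsto_nhds_unique (hD.comp (tendsto_id.const_mul_atTop' two_pos))
      ((hA.sub hB).congr fun N => ?_)
    simp only [Function.comp_apply, sum_range_two_mul_tmSign_mul, mul_sub, sum_sub_distrib, id]
  have hsum := ((hD.add hA).add hB).neg
  rw [hd, show -(Real.log 2 / 2 - b + Real.log 2 / 2 + b) = -Real.log 2 by ring] at hsum
  refine hsum.congr fun N => ?_
  simp only [log_tmFactor, mul_neg, mul_add, sum_neg_distrib, sum_add_distrib, id]

lemma prod_zpow_tm_eq_exp {x : ℕ → ℝ} (hx : ∀ n, 0 < x n) (N : ℕ) :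
    ∏ n ∈ range N, x n ^ ((-1 : ℤ) ^ tm n) =
      Real.exp (∑ n ∈ range N, tmSign n * Real.log (x n)) := by
  rw [Real.exp_sum]
  refine prod_congr rfl fun n _ => ?_
  rw [← Real.exp_log (zpow_pos (hx n) _), Real.log_zpow, tmSign]
  push_cast
  rfl

theorem prod_d :
    Tendsto (fun N => ∏ n ∈ Finset.range N,
        (((((n : ℝ) + 1) * (2 * (n : ℝ) + 1)) / (((n : ℝ) + 2) * (2 * (n : ℝ) + 3)))) ^ ((-1 : ℤ) ^ tm n))
      atTop (𝓝 ((1 / 2 : ℝ))) := by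
  have h := (Real.continuous_exp.tendsto _).comp tendsto_sum_tmSign_mul_log_tmFactor
  rw [Real.exp_neg, Real.exp_log two_pos, ← one_div] at h
  exact h.congr fun N => (prod_zpow_tm_eq_exp (fun n => by positivity) N).symm
end
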